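/- Let f, g : ℕ → ℝ be functions with f(k) > 0 and g(k) > 0 for all k, of uniform polynomial growth with exponents n_f and n_g respectively. If f(k) ≥ g(k) for every sufficiently large k, then n_f ≥ n_g. -/

import Mathlib

/-!
The quotient `h = g / f` is again of uniform polynomial growth, with exponent `ng - nf`.
A positive exponent `c` makes the increments `h (k + 1) - h k` eventually at least a constant
multiple of `1 / k`, so `h → ∞` by the divergence of the harmonic series; this is incompatible
with `g ≤ f`.
-/

open Filter Topology

/-- A positive function `f : ℕ → ℝ` is of uniform polynomial growth with
exponent `n` if `k * (f (k+1) - f k) / f k` tends to `n` as `k → ∞`. -/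
def UniformPolyGrowth (f : ℕ → ℝ) (n : ℝ) : Prop :=
  Filter.Tendsto (fun k : ℕ => (k : ℝ) * (f (k + 1) - f k) / f k) Filter.atTop (nhds n)

theorem tendsto_sum_range_inv_add_atTop (N : ℕ) :
    Tendsto (fun m => ∑ i ∈ Finset.range m, ((N + i : ℕ) : ℝ)⁻¹) atTop atTop := by
  refine (not_summable_iff_tendsto_nat_atTop_of_nonneg fun i => by positivity).1 ?_
  simpa only [add_comm N] using
    (summable_nat_add_iff N).not.2 Real.not_summable_natCast_inv

theorem tendsto_atTop_of_forall_div_le_sub {u : ℕ → ℝ} {a : ℝ} (ha : 0 < a) (N : ℕ)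
    (h : ∀ k ≥ N, a / k ≤ u (k + 1) - u k) : Tendsto u atTop atTop := by
  have hsum : ∀ m, u N + a * ∑ i ∈ Finset.range m, ((N + i : ℕ) : ℝ)⁻¹ ≤ u (m + N) := by
    intro m
    have htel : u (m + N) = u N + ∑ i ∈ Finset.range m, (u (N + i + 1) - u (N + i)) := by
      have := Finset.sum_range_sub (fun i => u (N + i)) m
      simp only [← add_assoc, add_zero] at this
      rw [this, add_comm m N]
      ring
    rw [htel, Finset.mul_sum]
    gcongr with i
    simpa [div_eq_mul_inv] using h (N + i) (Nat.le_add_right N i)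
  refine (tendsto_add_atTop_iff_nat N).1 (tendsto_atTop_mono hsum ?_)
  exact tendsto_atTop_add_const_left _ _
    ((tendsto_sum_range_inv_add_atTop N).const_mul_atTop ha)

namespace UniformPolyGrowth

variable {f g : ℕ → ℝ} {nf ng : ℝ}

theorem tendsto_div_succ (hfu : UniformPolyGrowth f nf) (hf : ∀ k, f k ≠ 0) :
    Tendsto (fun k => f k / f (k + 1)) atTop (𝓝 1) := by
  have hrel : Tendsto (fun k : ℕ => (k : ℝ) * (f (k + 1) - f k) / f k * (k : ℝ)⁻¹)
      atTop (𝓝 (nf * 0)) :=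
    hfu.mul (tendsto_inv_atTop_zero.comp tendsto_natCast_atTop_atTop)
  have hsucc : Tendsto (fun k => f (k + 1) / f k) atTop (𝓝 1) := by
    refine Tendsto.congr' ?_ (by simpa using hrel.const_add 1)
    filter_upwards [eventually_ne_atTop 0] with k hk
    field_simp [hf k]
    ring
  simpa using hsucc.inv₀ one_ne_zero

theorem div (hgu : UniformPolyGrowth g ng) (hfu : UniformPolyGrowth f nf)
    (hg : ∀ k, g k ≠ 0) (hf : ∀ k, f k ≠ 0) : UniformPolyGrowth (g / f) (ng - nf) := by
  -- `k Δ(g/f) / (g/f) = (k Δg / g - k Δf / f) * (f k / f (k + 1))`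
  have hlim := (hgu.sub hfu).mul (hfu.tendsto_div_succ hf)
  rw [mul_one] at hlim
  refine hlim.congr fun k => ?_
  simp only [Pi.div_apply]
  field_simp [hg k, hf k, hf (k + 1)]
  ring

theorem tendsto_atTop {h : ℕ → ℝ} {c : ℝ} (hu : UniformPolyGrowth h c) (hpos : ∀ k, 0 < h k)
    (hc : 0 < c) : Tendsto h atTop atTop := by
  obtain ⟨N, hN⟩ := eventually_atTop.1
    ((hu.eventually_const_lt (half_lt_self hc)).and (eventually_gt_atTop 0))
  have hstep : ∀ k ≥ N, c / 2 * h k / k ≤ h (k + 1) - h k := by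
    intro k hk
    obtain ⟨hlt, hk0⟩ := hN k hk
    rw [lt_div_iff₀ (hpos k)] at hlt
    rw [div_le_iff₀ (by exact_mod_cast hk0)]
    linarith
  have hmono : ∀ k ≥ N, h N ≤ h k := by
    intro k hk
    induction k, hk using Nat.le_induction with
    | base => exact le_rfl
    | succ k hk ih =>
      have hinc : 0 ≤ c / 2 * h k / k := by have := hpos k; positivity
      linarith [hstep k hk]
  refine tendsto_atTop_of_forall_div_le_sub (a := c / 2 * h N)
    (by have := hpos N; positivity) N fun k hk => ?_
  calc c / 2 * h N / k ≤ c / 2 * h k / k := by gcongr; exact hmono k hk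
    _ ≤ h (k + 1) - h k := hstep k hk

end UniformPolyGrowth

theorem uniformPolyGrowth_mono (f g : ℕ → ℝ) (hf : ∀ k, 0 < f k) (hg : ∀ k, 0 < g k)
    (nf ng : ℝ) (hfu : UniformPolyGrowth f nf) (hgu : UniformPolyGrowth g ng)
    (hle : ∃ k₀ : ℕ, ∀ k ≥ k₀, g k ≤ f k) :
    ng ≤ nf := by
  by_contra! hlt
  obtain ⟨k₀, hk₀⟩ := hle
  have hquot : Tendsto (g / f) atTop atTop :=
    (hgu.div hfu (fun k => (hg k).ne') (fun k => (hf k).ne')).tendsto_atTop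
      (fun k => div_pos (hg k) (hf k)) (sub_pos.2 hlt)
  obtain ⟨k, hgt, hk⟩ := ((hquot.eventually_gt_atTop 1).and (eventually_ge_atTop k₀)).exists
  rw [Pi.div_apply, one_lt_div (hf k)] at hgt
  exact (hk₀ k hk).not_gt hgt
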